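/- arXiv:0909.2804 — 6 statements merged into one kernel-verified Lean document; each statement's English description precedes it below -/
import Mathlib

section
/- Let ‖·‖ be a norm on ℝ² and h : [0,∞) → ℝ strictly convex and increasing, and set c(z) = h(‖z‖). Then for every p ∈ ℝ², the face ∂c*(p) has empty interior in ℝ²; equivalently, c is not affine on any open subset of ℝ². -/
/-- The Legendre–Fenchel conjugate of a real-valued function on `ℝ²`, valued in `EReal`. -/
noncomputable def fenchelConj (c : EuclideanSpace ℝ (Fin 2) → ℝ)
    (p : EuclideanSpace ℝ (Fin 2)) : EReal :=
  ⨆ z, (((inner ℝ p z : ℝ) - c z : ℝ) : EReal)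

/-!
If `z ∈ ∂c*(p)` and `c` has a subgradient at `z`, the Fenchel–Young inequality is an equality:
`c z = ⟪p, z⟫ - c*(p)`. Such subgradients exist everywhere: a nonnegative supporting slope of `h`
at `N z` times a Hahn–Banach functional supporting `N` at `z`. Hence if `∂c*(p)` had an interior
point, `c` would be affine on an open set. On a ray `t ↦ t • w` through a point `w ≠ 0` of that
set `c (t • w) = h (t * N w)`, so `h` would be affine on a nondegenerate interval, contradicting
strict convexity.
-/

open Set
open scoped RealInnerProductSpace

lemma ConvexOn.add_rightDeriv_mul_sub_le {S : Set ℝ} {f : ℝ → ℝ} (hf : ConvexOn ℝ S f)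
    {r t : ℝ} (hr : r ∈ interior S) (ht : t ∈ S) :
    f r + derivWithin f (Ioi r) r * (t - r) ≤ f t := by
  rcases lt_trichotomy t r with htr | rfl | hrt
  · have hslope : slope f t r ≤ derivWithin f (Ioi r) r :=
      (hf.slope_le_leftDeriv_of_mem_interior ht hr htr).trans
        (hf.leftDeriv_le_rightDeriv_of_mem_interior hr)
    rw [slope_def_field, div_le_iff₀ (sub_pos.2 htr)] at hslope
    linarith
  · simp
  · have hslope := hf.rightDeriv_le_slope_of_mem_interior hr ht hrt
    rw [slope_def_field, le_div_iff₀ (sub_pos.2 hrt)] at hslope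
    linarith

lemma Seminorm.exists_dual_le_eq {E : Type*} [AddCommGroup E] [Module ℝ E] (ν : Seminorm ℝ E)
    (w : E) : ∃ g : Module.Dual ℝ E, (∀ u, g u ≤ ν u) ∧ g w = ν w := by
  rcases eq_or_ne w 0 with rfl | hw
  · exact ⟨0, fun u => by simp, by simp⟩
  let f : Module.Dual ℝ (ℝ ∙ w) := ν w • (LinearEquiv.coord ℝ E w hw).toLinearMap
  have hf : ∀ x, f x ≤ ν x := fun x => by
    conv_rhs => rw [← LinearEquiv.coord_apply_smul ℝ E w hw x]
    rw [map_smul_eq_mul, Real.norm_eq_abs, mul_comm]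
    exact mul_le_mul_of_nonneg_left (le_abs_self _) (apply_nonneg ν w)
  obtain ⟨g, hgf, hgν⟩ := f.exists_extension_of_le_seminorm_real _ hf
  refine ⟨g, fun u => (le_abs_self _).trans (hgν u), ?_⟩
  simpa [f, LinearEquiv.coord_self] using hgf ⟨w, Submodule.mem_span_singleton_self w⟩

section InnerProductSpace

variable {E : Type*} [NormedAddCommGroup E] [InnerProductSpace ℝ E]

lemma Seminorm.exists_inner_le_eq [FiniteDimensional ℝ E] (ν : Seminorm ℝ E) (w : E) :
    ∃ v : E, (∀ u, ⟪v, u⟫ ≤ ν u) ∧ ⟪v, w⟫ = ν w := by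
  obtain ⟨g, hgν, hgw⟩ := ν.exists_dual_le_eq w
  refine ⟨(InnerProductSpace.toDual ℝ E).symm (LinearMap.toContinuousLinearMap g), ?_, ?_⟩ <;>
    simpa [InnerProductSpace.toDual_symm_apply]

lemma Seminorm.exists_subgradient_comp [FiniteDimensional ℝ E] (ν : Seminorm ℝ E) {h : ℝ → ℝ}
    (hmono : MonotoneOn h (Ici 0)) (hconv : ConvexOn ℝ (Ici 0) h) (z : E) :
    ∃ q : E, ∀ u, h (ν z) + ⟪q, u - z⟫ ≤ h (ν u) := by
  rcases (apply_nonneg ν z).eq_or_lt with hz | hz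
  · refine ⟨0, fun u => ?_⟩
    rw [← hz, inner_zero_left, add_zero]
    exact hmono self_mem_Ici (apply_nonneg ν u) (apply_nonneg ν u)
  set m := derivWithin h (Ioi (ν z)) (ν z)
  have hm : 0 ≤ m := (hmono.mono (Ioi_subset_Ici hz.le)).derivWithin_nonneg
  obtain ⟨v, hvν, hvz⟩ := ν.exists_inner_le_eq z
  refine ⟨m • v, fun u => ?_⟩
  have hsupp := hconv.add_rightDeriv_mul_sub_le (by simpa using hz) (apply_nonneg ν u)
  calc h (ν z) + ⟪m • v, u - z⟫ = h (ν z) + m * (⟪v, u⟫ - ν z) := by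
        rw [real_inner_smul_left, inner_sub_right, hvz]
    _ ≤ h (ν z) + m * (ν u - ν z) := by gcongr; exact hvν u
    _ ≤ h (ν u) := hsupp

lemma StrictConvexOn.not_forall_comp_seminorm_eq_inner_add [Nontrivial E] {h : ℝ → ℝ}
    (hconv : StrictConvexOn ℝ (Ici 0) h) {ν : Seminorm ℝ E} (hν : ∀ z, ν z = 0 → z = 0)
    {U : Set E} (hU : IsOpen U) (hne : U.Nonempty) (a : E) (b : ℝ) :
    ¬ ∀ z ∈ U, h (ν z) = ⟪a, z⟫ + b := by
  intro haff
  obtain ⟨w, hwU, hw0⟩ := (dense_compl_singleton (0 : E)).inter_open_nonempty U hU hne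
  have hνw : 0 < ν w := (apply_nonneg ν w).lt_of_ne' (mt (hν w) hw0)
  obtain ⟨ε, hε, hball⟩ := Metric.isOpen_iff.1
    (hU.preimage (continuous_id.smul continuous_const : Continuous fun t : ℝ => t • w)) 1
    (by simpa using hwU)
  have hray : ∀ δ, 0 ≤ δ → δ < ε → h ((1 + δ) * ν w) = (1 + δ) * ⟪a, w⟫ + b := by
    intro δ hδ hδε
    have hmem : (1 + δ) • w ∈ U := hball (by simp [abs_of_nonneg hδ, hδε])
    rw [← real_inner_smul_right, ← haff _ hmem, map_smul_eq_mul, Real.norm_eq_abs,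
      abs_of_nonneg (by linarith)]
  have hmid := hconv.2 (mem_Ici.2 hνw.le) (mem_Ici.2 (by positivity : 0 ≤ (1 + ε / 2) * ν w))
    (by nlinarith) (by norm_num : (0 : ℝ) < 1 / 2) (by norm_num : (0 : ℝ) < 1 / 2) (by norm_num)
  have h0 := hray 0 le_rfl hε
  have h1 := hray (ε / 2) (by positivity) (by linarith)
  have h2 := hray (ε / 4) (by positivity) (by linarith)
  rw [smul_eq_mul, smul_eq_mul, smul_eq_mul, smul_eq_mul,
    show 1 / 2 * ν w + 1 / 2 * ((1 + ε / 2) * ν w) = (1 + ε / 4) * ν w by ring] at hmid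
  simp only [add_zero, one_mul] at h0
  linarith

end InnerProductSpace

local notation "ℝ²" => EuclideanSpace ℝ (Fin 2)

lemma le_fenchelConj (c : ℝ² → ℝ) (q z : ℝ²) : ((⟪q, z⟫ - c z : ℝ) : EReal) ≤ fenchelConj c q :=
  le_iSup (fun z => ((⟪q, z⟫ - c z : ℝ) : EReal)) z

lemma fenchelConj_le_of_subgradient {c : ℝ² → ℝ} {q z : ℝ²}
    (hq : ∀ u, c z + ⟪q, u - z⟫ ≤ c u) : fenchelConj c q ≤ ((⟪q, z⟫ - c z : ℝ) : EReal) :=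
  iSup_le fun u => EReal.coe_le_coe_iff.2 <| by
    have := hq u
    rw [inner_sub_right] at this
    linarith

lemma fenchelConj_eq_of_mem_subdifferential {c : ℝ² → ℝ} {p z : ℝ²}
    (hz : ∀ q, fenchelConj c p + ((⟪z, q - p⟫ : ℝ) : EReal) ≤ fenchelConj c q)
    (hc : ∃ q, ∀ u, c z + ⟪q, u - z⟫ ≤ c u) :
    fenchelConj c p = ((⟪p, z⟫ - c z : ℝ) : EReal) := by
  obtain ⟨q, hq⟩ := hc
  refine le_antisymm ?_ (le_fenchelConj c p z)
  have hle := (hz q).trans (fenchelConj_le_of_subgradient hq)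
  rw [← EReal.le_sub_iff_add_le (.inl (EReal.coe_ne_bot _)) (.inl (EReal.coe_ne_top _)),
    ← EReal.coe_sub] at hle
  convert hle using 2
  rw [inner_sub_right, real_inner_comm z q, real_inner_comm z p]
  ring

/-- for `c z = h (N z)` with `N` a norm on `ℝ²` and `h` strictly convex
increasing on `[0,∞)`, every face `∂c*(p)` has empty interior in `ℝ²`. -/
theorem stmt5 (N : EuclideanSpace ℝ (Fin 2) → ℝ)
    (hN0 : ∀ z, N z = 0 ↔ z = 0)
    (hNsmul : ∀ (a : ℝ) (z : EuclideanSpace ℝ (Fin 2)), N (a • z) = |a| * N z)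
    (hNadd : ∀ z w, N (z + w) ≤ N z + N w)
    (h : ℝ → ℝ)
    (hmono : MonotoneOn h (Set.Ici 0))
    (hconv : StrictConvexOn ℝ (Set.Ici 0) h)
    (c : EuclideanSpace ℝ (Fin 2) → ℝ) (hc : ∀ z, c z = h (N z))
    (p : EuclideanSpace ℝ (Fin 2)) :
    interior {z : EuclideanSpace ℝ (Fin 2) |
        ∀ q, fenchelConj c p + ((inner ℝ z (q - p) : ℝ) : EReal) ≤ fenchelConj c q} = ∅ := by
  let ν : Seminorm ℝ ℝ² := .of N hNadd fun a z => by rw [hNsmul, Real.norm_eq_abs]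
  have hc_subgradient (z : ℝ²) : ∃ q, ∀ u, c z + ⟪q, u - z⟫ ≤ c u := by
    obtain ⟨q, hq⟩ := ν.exists_subgradient_comp hmono hconv.convexOn z
    exact ⟨q, fun u => by rw [hc, hc]; exact hq u⟩
  refine eq_empty_iff_forall_notMem.2 fun x hx => ?_
  refine hconv.not_forall_comp_seminorm_eq_inner_add (ν := ν) (fun z => (hN0 z).1)
    isOpen_interior ⟨x, hx⟩ p (-(fenchelConj c p).toReal) fun z hz => ?_
  change h (N z) = _
  rw [fenchelConj_eq_of_mem_subdifferential (interior_subset hz) (hc_subgradient z),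
    EReal.toReal_coe, hc]
  ring
end

section
/- Let ‖·‖ be a norm on ℝ². The collection of maximal nondegenerate line segments contained in the unit sphere {z ∈ ℝ² : ‖z‖ = 1} is at most countable. -/
/-!
For a maximal segment `[u, v]` of the unit sphere of a seminorm `p` on a plane, the open cone
`{a • u + b • v | a, b > 0}` is a nonempty open set. Two such cones are disjoint: a common point
rescaled to `p = 1` lies in the relative interiors of both segments. If the two segments had
independent directions, that point would be interior to the unit ball, which is impossible on the
sphere; so they lie on one line, their union is a segment of the sphere, and maximality makes them
equal. A plane carries only countably many disjoint nonempty open sets.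
-/

open Set Module

section Algebraic

variable {E : Type*} [AddCommGroup E] [Module ℝ E]

def IsMaximalSegment (A S : Set E) : Prop :=
  (∃ u v, u ≠ v ∧ S = segment ℝ u v) ∧ S ⊆ A ∧
    ∀ u' v', segment ℝ u' v' ⊆ A → S ⊆ segment ℝ u' v' → S = segment ℝ u' v'

theorem IsMaximalSegment.eq_of_union_eq_segment {A S T : Set E} (hS : IsMaximalSegment A S)
    (hT : IsMaximalSegment A T) {P Q : E} (h : S ∪ T = segment ℝ P Q) : S = T := by
  have hPQ : segment ℝ P Q ⊆ A := h ▸ union_subset hS.2.1 hT.2.1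
  rw [hS.2.2 P Q hPQ (h ▸ subset_union_left), hT.2.2 P Q hPQ (h ▸ subset_union_right)]

theorem exists_segment_eq_union_segment {a b c d : ℝ}
    (h : (segment ℝ a b ∩ segment ℝ c d).Nonempty) :
    ∃ m M, segment ℝ a b ∪ segment ℝ c d = segment ℝ m M := by
  obtain ⟨x, hx₁, hx₂⟩ := h
  rw [segment_eq_uIcc] at hx₁ hx₂
  refine ⟨min (min a b) (min c d), max (max a b) (max c d), ?_⟩
  rw [segment_eq_uIcc, segment_eq_uIcc, segment_eq_Icc (min_le_left _ _ |>.trans <|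
    min_le_left _ _ |>.trans <| le_max_left _ _ |>.trans <| le_max_left _ _)]
  exact Icc_union_Icc' (hx₂.1.trans hx₁.2) (hx₁.1.trans hx₂.2)

theorem exists_segment_eq_union_image_segment (f : ℝ →ᵃ[ℝ] E) {a b c d : ℝ}
    (h : (segment ℝ a b ∩ segment ℝ c d).Nonempty) :
    ∃ P Q, segment ℝ (f a) (f b) ∪ segment ℝ (f c) (f d) = segment ℝ P Q := by
  obtain ⟨m, M, hmM⟩ := exists_segment_eq_union_segment h
  exact ⟨f m, f M, by rw [← image_segment, ← image_segment, ← image_union, hmM, image_segment]⟩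

theorem exists_forall_abs_le_add_smul_mem_segment {u v z : E} (hz : z ∈ openSegment ℝ u v) :
    ∃ ε : ℝ, 0 < ε ∧ ∀ s : ℝ, |s| ≤ ε → z + s • (v - u) ∈ segment ℝ u v := by
  rw [openSegment_eq_image'] at hz
  obtain ⟨α, ⟨hα₀, hα₁⟩, rfl⟩ := hz
  refine ⟨min α (1 - α), lt_min hα₀ (by linarith), fun s hs => ?_⟩
  rw [segment_eq_image']
  refine ⟨α + s, ⟨?_, ?_⟩, by simp only [add_smul]; abel⟩
  · linarith [neg_abs_le s, min_le_left α (1 - α)]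
  · linarith [le_abs_self s, min_le_right α (1 - α)]

theorem Convex.exists_one_add_smul_mem {K : Set E} (hK : Convex ℝ K) {z d d' : E} {ε : ℝ}
    (hε : 0 < ε) (hd : ∀ s : ℝ, |s| ≤ ε → z + s • d ∈ K)
    (hd' : ∀ s : ℝ, |s| ≤ ε → z + s • d' ∈ K) (hz : z ∈ Submodule.span ℝ {d, d'}) :
    ∃ δ : ℝ, 0 < δ ∧ (1 + δ) • z ∈ K := by
  obtain ⟨a, b, rfl⟩ := Submodule.mem_span_pair.1 hz
  set δ := ε / (2 * (|a| + |b| + 1))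
  have hδ : 0 < δ := by positivity
  have hδε : 2 * δ * (|a| + |b| + 1) = ε := by simp only [δ]; field_simp
  have hsmall : ∀ x, |x| ≤ |a| + |b| + 1 → |2 * δ * x| ≤ ε := fun x hx => by
    rw [abs_mul, abs_of_pos (by positivity : 0 < 2 * δ), ← hδε]
    gcongr
  refine ⟨δ, hδ, ?_⟩
  have hsplit : (1 + δ) • (a • d + b • d') = (1 / 2 : ℝ) • (a • d + b • d' + (2 * δ * a) • d)
      + (1 / 2 : ℝ) • (a • d + b • d' + (2 * δ * b) • d') := by module
  rw [hsplit]
  refine hK (hd _ (hsmall a ?_)) (hd' _ (hsmall b ?_)) (by norm_num) (by norm_num) (by norm_num)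
  · linarith [abs_nonneg b]
  · linarith [abs_nonneg a]

theorem Seminorm.linearIndependent_of_segment_subset_sphere (p : Seminorm ℝ E) {u v : E}
    (huv : u ≠ v) (h : segment ℝ u v ⊆ {z | p z = 1}) : LinearIndependent ℝ ![u, v] := by
  have hu : p u = 1 := h (left_mem_segment ℝ u v)
  have hu0 : u ≠ 0 := by rintro rfl; simp at hu
  refine (LinearIndependent.pair_iff' hu0).2 fun a hav => ?_
  subst hav
  have ha : |a| = 1 := by
    simpa [map_smul_eq_mul, hu] using h (right_mem_segment ℝ u (a • u))
  rcases (abs_eq zero_le_one).1 ha with rfl | rfl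
  · simp at huv
  · have h0 : (0 : E) ∈ segment ℝ u ((-1 : ℝ) • u) :=
      ⟨1 / 2, 1 / 2, by norm_num, by norm_num, by norm_num, by module⟩
    simpa using h h0

theorem Seminorm.not_linearIndependent_of_mem_openSegment (p : Seminorm ℝ E)
    (hE : finrank ℝ E = 2) {u v u' v' z : E} (hS : segment ℝ u v ⊆ {z | p z = 1})
    (hT : segment ℝ u' v' ⊆ {z | p z = 1}) (hz : z ∈ openSegment ℝ u v)
    (hz' : z ∈ openSegment ℝ u' v') : ¬LinearIndependent ℝ ![v - u, v' - u'] := by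
  intro hind
  obtain ⟨ε, hε, hε_mem⟩ := exists_forall_abs_le_add_smul_mem_segment hz
  obtain ⟨ε', hε', hε'_mem⟩ := exists_forall_abs_le_add_smul_mem_segment hz'
  have hball {u v : E} (h : segment ℝ u v ⊆ {z | p z = 1}) : segment ℝ u v ⊆ p.closedBall 0 1 :=
    fun x hx => p.mem_closedBall_zero.2 (h hx).le
  have hspan : z ∈ Submodule.span ℝ {v - u, v' - u'} := by
    rw [← Matrix.range_cons_cons_empty, hind.span_eq_top_of_card_eq_finrank (by simp [hE])]
    trivial
  obtain ⟨δ, hδ, hmem⟩ := (p.convex_closedBall 0 1).exists_one_add_smul_mem (lt_min hε hε')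
    (fun s hs => hball hS (hε_mem s (hs.trans (min_le_left _ _))))
    (fun s hs => hball hT (hε'_mem s (hs.trans (min_le_right _ _)))) hspan
  have hpz : p z = 1 := hS (openSegment_subset_segment ℝ u v hz)
  rw [p.mem_closedBall_zero, map_smul_eq_mul, hpz, Real.norm_of_nonneg (by positivity)] at hmem
  linarith

theorem IsMaximalSegment.eq_of_mem_openSegment (p : Seminorm ℝ E) (hE : finrank ℝ E = 2)
    {u v u' v' z : E} (huv : u ≠ v) (hS : IsMaximalSegment {z | p z = 1} (segment ℝ u v))
    (hT : IsMaximalSegment {z | p z = 1} (segment ℝ u' v')) (hz : z ∈ openSegment ℝ u v)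
    (hz' : z ∈ openSegment ℝ u' v') : segment ℝ u v = segment ℝ u' v' := by
  obtain ⟨c, hc⟩ : ∃ c : ℝ, c • (v - u) = v' - u' := by
    by_contra! h
    exact p.not_linearIndependent_of_mem_openSegment hE hS.2.1 hT.2.1 hz hz'
      ((LinearIndependent.pair_iff' (sub_ne_zero.2 huv.symm)).2 h)
  rw [openSegment_eq_image_lineMap] at hz hz'
  obtain ⟨α, hα, rfl⟩ := hz
  obtain ⟨α', hα', hz'⟩ := hz'
  rw [AffineMap.lineMap_apply_module', AffineMap.lineMap_apply_module'] at hz'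
  set f : ℝ →ᵃ[ℝ] E := AffineMap.lineMap u v
  have hu' : f (α - α' * c) = u' := by
    rw [AffineMap.lineMap_apply_module']
    linear_combination (norm := module) -hz' - α' • hc
  have hv' : f (α - α' * c + c) = v' := by
    rw [AffineMap.lineMap_apply_module']
    linear_combination (norm := module) -hz' - α' • hc + hc
  have hα_mem : α ∈ segment ℝ (α - α' * c) (α - α' * c + c) := by
    rw [segment_eq_image']
    exact ⟨α', Ioo_subset_Icc_self hα', by simp only; ring⟩
  obtain ⟨P, Q, hPQ⟩ := exists_segment_eq_union_image_segment f
    ⟨α, by rw [segment_eq_Icc zero_le_one]; exact Ioo_subset_Icc_self hα, hα_mem⟩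
  rw [AffineMap.lineMap_apply_zero, AffineMap.lineMap_apply_one, hu', hv'] at hPQ
  exact hS.eq_of_union_eq_segment hT hPQ

def openCone (u v : E) : Set E := {x | ∃ a b : ℝ, 0 < a ∧ 0 < b ∧ a • u + b • v = x}

theorem exists_pos_smul_eq_of_mem_openCone {u v x : E} (hx : x ∈ openCone u v) :
    ∃ t : ℝ, 0 < t ∧ ∃ y ∈ openSegment ℝ u v, t • y = x := by
  obtain ⟨a, b, ha, hb, rfl⟩ := hx
  have hab : 0 < a + b := add_pos ha hb
  refine ⟨a + b, hab, (a / (a + b)) • u + (b / (a + b)) • v,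
    ⟨_, _, div_pos ha hab, div_pos hb hab, by field_simp, rfl⟩, ?_⟩
  rw [smul_add, smul_smul, smul_smul, mul_div_cancel₀ _ hab.ne', mul_div_cancel₀ _ hab.ne']

end Algebraic

section Topological

variable {E : Type*} [NormedAddCommGroup E] [NormedSpace ℝ E]

theorem isOpen_openCone (hE : finrank ℝ E = 2) {u v : E} (h : LinearIndependent ℝ ![u, v]) :
    IsOpen (openCone u v) := by
  have : FiniteDimensional ℝ E := Module.finite_of_finrank_eq_succ hE
  let B := basisOfLinearIndependentOfCardEqFinrank h (by simp [hE])
  have hB : ⇑B = ![u, v] := coe_basisOfLinearIndependentOfCardEqFinrank h _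
  have hcone : openCone u v = B.equivFun.symm '' univ.pi fun _ => Ioi 0 := by
    ext x
    simp only [openCone, B.equivFun_symm_apply, hB, Fin.sum_univ_two, mem_image,
      mem_univ_pi, mem_Ioi, Fin.forall_fin_two, Matrix.cons_val_zero, Matrix.cons_val_one]
    constructor
    · rintro ⟨a, b, ha, hb, rfl⟩
      exact ⟨![a, b], ⟨ha, hb⟩, rfl⟩
    · rintro ⟨c, ⟨h0, h1⟩, rfl⟩
      exact ⟨c 0, c 1, h0, h1, rfl⟩
  rw [hcone]
  exact B.equivFun.symm.toContinuousLinearEquiv.toHomeomorph.isOpenMap _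
    (isOpen_set_pi finite_univ fun _ _ => isOpen_Ioi)

theorem Seminorm.countable_setOf_isMaximalSegment_sphere (p : Seminorm ℝ E)
    (hE : finrank ℝ E = 2) : {S | IsMaximalSegment {z | p z = 1} S}.Countable := by
  have : FiniteDimensional ℝ E := Module.finite_of_finrank_eq_succ hE
  choose! U V hUV hUVS using fun S (hS : IsMaximalSegment {z | p z = 1} S) => hS.1
  have hp_openSegment {S} (hS : IsMaximalSegment {z | p z = 1} S) {y}
      (hy : y ∈ openSegment ℝ (U S) (V S)) : p y = 1 :=
    hS.2.1 (hUVS S hS ▸ openSegment_subset_segment ℝ _ _ hy)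
  refine PairwiseDisjoint.countable_of_isOpen (s := fun S => openCone (U S) (V S)) ?_
    (fun S hS => isOpen_openCone hE (p.linearIndependent_of_segment_subset_sphere (hUV S hS)
      (hUVS S hS ▸ hS.2.1)))
    (fun S _ => ⟨U S + V S, 1, 1, one_pos, one_pos, by simp⟩)
  intro S hS T hT hST
  refine disjoint_left.2 fun x hxS hxT => hST ?_
  obtain ⟨t, ht, y, hy, rfl⟩ := exists_pos_smul_eq_of_mem_openCone hxS
  obtain ⟨t', ht', y', hy', hyy'⟩ := exists_pos_smul_eq_of_mem_openCone hxT
  have htt' : t' = t := by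
    simpa [map_smul_eq_mul, hp_openSegment hS hy, hp_openSegment hT hy', abs_of_pos ht,
      abs_of_pos ht']
      using congrArg p hyy'
  subst htt'
  rw [smul_right_injective E ht.ne' hyy'] at hy'
  rw [hUVS S hS, hUVS T hT]
  exact IsMaximalSegment.eq_of_mem_openSegment p hE (hUV S hS) (hUVS S hS ▸ hS)
    (hUVS T hT ▸ hT) hy hy'

end Topological

theorem stmt6_general (N : EuclideanSpace ℝ (Fin 2) → ℝ)
    (hNsmul : ∀ (a : ℝ) (z : EuclideanSpace ℝ (Fin 2)), N (a • z) = |a| * N z)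
    (hNadd : ∀ z w, N (z + w) ≤ N z + N w) :
    Set.Countable {S : Set (EuclideanSpace ℝ (Fin 2)) |
        (∃ u v, u ≠ v ∧ S = segment ℝ u v) ∧
        S ⊆ {z | N z = 1} ∧
        (∀ u' v', segment ℝ u' v' ⊆ {z | N z = 1} → S ⊆ segment ℝ u' v' →
          S = segment ℝ u' v')} := by
  let p : Seminorm ℝ (EuclideanSpace ℝ (Fin 2)) :=
    Seminorm.of N hNadd fun a z => by rw [hNsmul, Real.norm_eq_abs]
  exact p.countable_setOf_isMaximalSegment_sphere finrank_euclideanSpace_fin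

/-- for an arbitrary norm `N` on `ℝ²`, the collection of maximal nondegenerate
segments contained in the unit sphere `{z : N z = 1}` is at most countable. -/
theorem stmt6 (N : EuclideanSpace ℝ (Fin 2) → ℝ)
    (hN0 : ∀ z, N z = 0 ↔ z = 0)
    (hNsmul : ∀ (a : ℝ) (z : EuclideanSpace ℝ (Fin 2)), N (a • z) = |a| * N z)
    (hNadd : ∀ z w, N (z + w) ≤ N z + N w) :
    Set.Countable {S : Set (EuclideanSpace ℝ (Fin 2)) |
        (∃ u v, u ≠ v ∧ S = segment ℝ u v) ∧
        S ⊆ {z | N z = 1} ∧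
        (∀ u' v', segment ℝ u' v' ⊆ {z | N z = 1} → S ⊆ segment ℝ u' v' →
          S = segment ℝ u' v')} :=
  stmt6_general N hNsmul hNadd
end

section
/- Let K ⊆ ℝ² be convex, h : ℝ → ℝ, and suppose φ, ψ : ℝ² → ℝ satisfy φ(x) + ψ(y) ≤ h(x₁ − y₁) for all x, y with x − y ∈ K. Suppose there are points y = (m, y₂) and ỹ = (m, ỹ₂) with ỹ₂ < y₂ such that x − y ∈ K, x − ỹ ∈ K, and both equalities φ(x) + ψ(y) = h(x₁ − m) and φ(x) + ψ(ỹ) = h(x₁ − m) hold. Then x is a local maximum of φ along the vertical line t ↦ x + t e₂: there is δ > 0 such that φ(x + t e₂) ≤ φ(x) for all |t| ≤ δ. -/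
/-- under the constraint inequality `φ(x)+ψ(y) ≤ h(x₁−y₁)` for `x−y ∈ K`,
if two points `y = (m, y₂)`, `ỹ = (m, ỹ₂)` with `ỹ₂ < y₂` both satisfy the constraint and
the equality, then `x` is a local maximum of `φ` along the vertical line `t ↦ x + t e₂`. -/
theorem stmt11 (K : Set (EuclideanSpace ℝ (Fin 2))) (hK : Convex ℝ K)
    (h : ℝ → ℝ) (φ ψ : EuclideanSpace ℝ (Fin 2) → ℝ)
    (hpot : ∀ a b : EuclideanSpace ℝ (Fin 2), a - b ∈ K → φ a + ψ b ≤ h (a 0 - b 0))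
    (x y ytilde : EuclideanSpace ℝ (Fin 2)) (m : ℝ)
    (hy1 : y 0 = m) (hyt1 : ytilde 0 = m) (hlt : ytilde 1 < y 1)
    (hxy : x - y ∈ K) (hxyt : x - ytilde ∈ K)
    (heq : φ x + ψ y = h (x 0 - m)) (heqt : φ x + ψ ytilde = h (x 0 - m)) :
    ∃ δ > (0 : ℝ), ∀ t : ℝ, |t| ≤ δ →
      φ (x + t • EuclideanSpace.single (1 : Fin 2) (1 : ℝ)) ≤ φ x := by
  set e := EuclideanSpace.single (1 : Fin 2) (1 : ℝ) with he
  set d := y 1 - ytilde 1 with hd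
  have hd0 : (0 : ℝ) < d := by simp only [hd]; linarith
  have key : y - ytilde = d • e := by
    ext i
    fin_cases i
    · simp [he, hy1, hyt1]
    · simp [he, hd]
  have hyt : ytilde = y - d • e := by rw [← key]; abel
  have he0 : e 0 = 0 := by simp [he]
  refine ⟨d, hd0, fun t ht => ?_⟩
  have hx0 : (x + t • e) 0 = x 0 := by
    simp [PiLp.add_apply, PiLp.smul_apply, he0]
  rw [abs_le] at ht
  rcases le_total 0 t with htpos | htneg
  · have hb0 : 0 ≤ t / d := div_nonneg htpos hd0.le
    have hb1 : t / d ≤ 1 := by rw [div_le_one hd0]; linarith [ht.2]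
    have hmem : (x + t • e) - y ∈ K := by
      have hmem' := hK hxy hxyt (by linarith : (0:ℝ) ≤ 1 - t/d) hb0 (by ring)
      have hveq : (1 - t/d) • (x - y) + (t/d) • (x - ytilde) = (x + t • e) - y := by
        rw [hyt]
        have hsm : (t/d) • (d • e) = t • e := by
          rw [smul_smul, div_mul_cancel₀ t hd0.ne']
        calc (1 - t/d) • (x - y) + (t/d) • (x - (y - d • e))
            = (x - y) + (t/d) • (d • e) := by module
          _ = (x + t • e) - y := by rw [hsm]; abel
      rwa [hveq] at hmem'
    have := hpot (x + t • e) y hmem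
    rw [hx0, hy1, ← heq] at this
    linarith
  · have hb0 : 0 ≤ -t / d := div_nonneg (by linarith) hd0.le
    have hb1 : -t / d ≤ 1 := by rw [div_le_one hd0]; linarith [ht.1]
    have hmem : (x + t • e) - ytilde ∈ K := by
      have hmem' := hK hxyt hxy (by linarith : (0:ℝ) ≤ 1 - (-t)/d) hb0 (by ring)
      have hveq : (1 - (-t)/d) • (x - ytilde) + ((-t)/d) • (x - y) = (x + t • e) - ytilde := by
        rw [hyt]
        have hsm : ((-t)/d) • (d • e) = (-t) • e := by
          rw [smul_smul, div_mul_cancel₀ (-t) hd0.ne']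
        calc (1 - (-t)/d) • (x - (y - d • e)) + ((-t)/d) • (x - y)
            = (x - (y - d • e)) - ((-t)/d) • (d • e) := by module
          _ = (x + t • e) - (y - d • e) := by rw [hsm]; module
      rwa [hveq] at hmem'
    have := hpot (x + t • e) ytilde hmem
    rw [hx0, hyt1, ← heqt] at this
    linarith
end

section
/- Let μ, ν be probability measures on ℝ, with μ having no atoms, and suppose there exists a coupling γ of μ and ν supported in {(s,t) : s − t ∈ [a,b]} for a closed interval [a,b]. Then the monotone (nondecreasing) transport map T from μ to ν also satisfies s − T(s) ∈ [a,b] for μ-a.e. s. -/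
/-!
Let `F`, `G` be the cdfs of `μ` and `ν`. A coupling moving every `s` to some `t` with
`s - t ∈ [a, b]` gives `F s ≤ G (s - a)` and `G t ≤ F (t + b)`. The first puts `s - a` in the set
`{t | F s ≤ G t}` whose infimum is `T s`, so `T s ≤ s - a`. By the second, every `t` in that set
has `F s ≤ F (t + b)`, which forces `s - b ≤ t` whenever `F` is strictly increasing to the left of
`s`. This fails only when `μ (q, s] = 0` for some rational `q < s`; for fixed `q` these `s` form an
interval exhausted by the null sets `(q, s]`, hence a null set.
-/

open MeasureTheory

/-- The monotone (nondecreasing) transport map `T = G⁻¹ ∘ F`, where `F` is the cdf of `μ`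
and `G⁻¹` the generalized inverse of the cdf of `ν`. -/
noncomputable def monotoneMap (μ ν : Measure ℝ) (s : ℝ) : ℝ :=
  sInf {t : ℝ | (μ (Set.Iic s)).toReal ≤ (ν (Set.Iic t)).toReal}

open ProbabilityTheory Filter Set Topology

lemma MeasureTheory.Measure.map_apply_le_map_apply_of_ae {α β δ : Type*} [MeasurableSpace α]
    [MeasurableSpace β] [MeasurableSpace δ] {ρ : Measure α} {f : α → β} {g : α → δ}
    {A : Set β} {B : Set δ} (hf : Measurable f) (hg : Measurable g) (hA : MeasurableSet A)
    (hB : MeasurableSet B) (h : ∀ᵐ x ∂ρ, f x ∈ A → g x ∈ B) : ρ.map f A ≤ ρ.map g B := by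
  rw [Measure.map_apply hf hA, Measure.map_apply hg hB]
  exact measure_mono_ae h

lemma measure_setOf_lt_and_measure_Ioc_eq_zero (μ : Measure ℝ) (q : ℝ) :
    μ {s | q < s ∧ μ (Ioc q s) = 0} = 0 := by
  set C := {s | q < s ∧ μ (Ioc q s) = 0}
  -- `C` is an interval, so its subtype order has a countably generated `atTop`.
  have : C.OrdConnected := ⟨fun _ hx _ hz _ hy =>
    ⟨hx.1.trans_le hy.1, measure_mono_null (Ioc_subset_Ioc_right hy.2) hz.2⟩⟩
  have hmono : Monotone fun s : C => Ioc q (s : ℝ) := fun _ _ hst => Ioc_subset_Ioc_right hst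
  refine measure_mono_null (fun s hs => mem_iUnion.2 ⟨⟨s, hs⟩, hs.1, le_rfl⟩ :
    C ⊆ ⋃ s : C, Ioc q (s : ℝ)) ?_
  rw [hmono.measure_iUnion]
  exact ENNReal.iSup_eq_zero.2 fun s => s.2.2

theorem ae_forall_lt_measure_Ioc_ne_zero (μ : Measure ℝ) :
    ∀ᵐ s ∂μ, ∀ u < s, μ (Ioc u s) ≠ 0 := by
  refine measure_mono_null (fun s hs => ?_)
    (measure_iUnion_null fun q : ℚ => measure_setOf_lt_and_measure_Ioc_eq_zero μ q)
  obtain ⟨u, hus, hnull⟩ : ∃ u < s, μ (Ioc u s) = 0 := by simpa using hs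
  obtain ⟨q, huq, hqs⟩ := exists_rat_btwn hus
  exact mem_iUnion.2 ⟨q, hqs, measure_mono_null (Ioc_subset_Ioc_left huq.le) hnull⟩

section Cdf

variable {μ ν : Measure ℝ} [IsProbabilityMeasure μ] [IsProbabilityMeasure ν]

lemma cdf_le_cdf_iff {s t : ℝ} : cdf μ s ≤ cdf ν t ↔ μ (Iic s) ≤ ν (Iic t) := by
  rw [← ofReal_cdf, ← ofReal_cdf, ENNReal.ofReal_le_ofReal_iff (cdf_nonneg _ _)]

lemma cdf_lt_cdf_iff_measure_Ioc_ne_zero {u s : ℝ} : cdf μ u < cdf μ s ↔ μ (Ioc u s) ≠ 0 := by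
  rw [← measure_cdf μ, StieltjesFunction.measure_Ioc, measure_cdf, Ne, ENNReal.ofReal_eq_zero,
    not_le, sub_pos]

lemma cdf_le_cdf_add_of_ae_le {Ω : Type*} [MeasurableSpace Ω] {ρ : Measure Ω} {X Y : Ω → ℝ}
    (hX : Measurable X) (hY : Measurable Y) (hμ : ρ.map X = μ) (hν : ρ.map Y = ν) {c : ℝ}
    (h : ∀ᵐ ω ∂ρ, Y ω ≤ X ω + c) (s : ℝ) : cdf μ s ≤ cdf ν (s + c) := by
  rw [cdf_le_cdf_iff, ← hμ, ← hν]
  refine Measure.map_apply_le_map_apply_of_ae hX hY measurableSet_Iic measurableSet_Iic ?_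
  filter_upwards [h] with ω hω hXs
  exact show Y ω ≤ s + c by linarith [mem_Iic.1 hXs]

lemma monotoneMap_eq_sInf_cdf (s : ℝ) : monotoneMap μ ν s = sInf {t | cdf μ s ≤ cdf ν t} := by
  simp only [monotoneMap, cdf_eq_real, measureReal_def]

end Cdf

lemma bddBelow_setOf_le_of_tendsto_atBot {G : ℝ → ℝ} (hG : Tendsto G atBot (𝓝 0)) {c : ℝ}
    (hc : 0 < c) : BddBelow {t | c ≤ G t} := by
  obtain ⟨t₀, ht₀⟩ := eventually_atBot.1 (hG.eventually (gt_mem_nhds hc))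
  exact ⟨t₀, fun t ht => (not_le.1 fun htt₀ => (ht₀ t htt₀).not_ge ht).le⟩

lemma sub_sInf_setOf_le_mem_Icc {F G : ℝ → ℝ} (hG : Tendsto G atBot (𝓝 0)) {a b s : ℝ}
    (hpos : 0 < F s) (hsa : F s ≤ G (s - a)) (hGF : ∀ t, G t ≤ F (t + b))
    (hs : ∀ u < s, F u < F s) : s - sInf {t | F s ≤ G t} ∈ Icc a b := by
  have hup : sInf {t | F s ≤ G t} ≤ s - a :=
    csInf_le (bddBelow_setOf_le_of_tendsto_atBot hG hpos) hsa
  have hlow : s - b ≤ sInf {t | F s ≤ G t} := le_csInf ⟨s - a, hsa⟩ fun t ht => by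
    by_contra! h
    exact (hs (t + b) (by linarith)).not_ge (ht.trans (hGF t))
  constructor <;> linarith

theorem stmt13_general (μ ν : Measure ℝ) [IsProbabilityMeasure μ] [IsProbabilityMeasure ν]
    (a b : ℝ)
    (γ : Measure (ℝ × ℝ))
    (hfst : γ.fst = μ) (hsnd : γ.snd = ν)
    (hsupp : γ {p : ℝ × ℝ | p.1 - p.2 ∈ Set.Icc a b}ᶜ = 0) :
    ∀ᵐ s ∂μ, s - monotoneMap μ ν s ∈ Set.Icc a b := by
  have hγ : ∀ᵐ p ∂γ, p.1 - p.2 ∈ Icc a b := hsupp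
  have hμν (s : ℝ) : cdf μ s ≤ cdf ν (s - a) := by
    simpa only [sub_eq_add_neg] using cdf_le_cdf_add_of_ae_le measurable_fst measurable_snd
      hfst hsnd (hγ.mono fun p hp => by linarith [hp.1]) s
  have hνμ : ∀ t, cdf ν t ≤ cdf μ (t + b) :=
    cdf_le_cdf_add_of_ae_le measurable_snd measurable_fst hsnd hfst
      (hγ.mono fun p hp => by linarith [hp.2])
  filter_upwards [ae_forall_lt_measure_Ioc_ne_zero μ] with s hs
  have hstrict (u : ℝ) (hu : u < s) : cdf μ u < cdf μ s :=
    cdf_lt_cdf_iff_measure_Ioc_ne_zero.2 (hs u hu)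
  rw [monotoneMap_eq_sInf_cdf]
  exact sub_sInf_setOf_le_mem_Icc (tendsto_cdf_atBot ν)
    ((cdf_nonneg μ _).trans_lt (hstrict (s - 1) (sub_one_lt s))) (hμν s) hνμ hstrict

/-- if some coupling of `μ` (atomless) and `ν` is supported in
`{(s,t) : s − t ∈ [a,b]}`, then the monotone transport map `T` from `μ` to `ν` satisfies
`s − T(s) ∈ [a,b]` for `μ`-a.e. `s`. -/
theorem stmt13 (μ ν : Measure ℝ) [IsProbabilityMeasure μ] [IsProbabilityMeasure ν]
    [NullSingletonClass μ] (a b : ℝ)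
    (γ : Measure (ℝ × ℝ)) [IsProbabilityMeasure γ]
    (hfst : γ.fst = μ) (hsnd : γ.snd = ν)
    (hsupp : γ {p : ℝ × ℝ | p.1 - p.2 ∈ Set.Icc a b}ᶜ = 0) :
    ∀ᵐ s ∂μ, s - monotoneMap μ ν s ∈ Set.Icc a b :=
  stmt13_general μ ν a b γ hfst hsnd hsupp
end

section
/- Let μ, ν be probability measures on ℝ^d with μ absolutely continuous with respect to Lebesgue measure, K ⊆ ℝ^d closed convex, and h : ℝ^d → ℝ strictly convex. Suppose γ is a coupling of μ and ν and φ, ψ : ℝ^d → ℝ are Lipschitz functions satisfying φ(x) + ψ(y) ≤ h(x−y) whenever x − y ∈ K, with equality γ-a.e. Then γ is induced by a map: there exists a Borel map T : ℝ^d → ℝ^d with γ = (id × T)_# μ, given μ-a.e. by T(x) = x − z̄(∇φ(x)), where z̄(l) is the unique minimizer over K of z ↦ h(z) − ⟨l, z⟩. -/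
/-!
The equality `φ x + ψ y = h (x - y)` says that `z₀ = x - y` minimizes `z ↦ h z - φ (y + z)`
over `K`. At a point `x` where `φ` is differentiable, comparing `φ` along the segment from
`z₀` to any `z ∈ K` with the chord of the convex function `h` turns this into the first-order
condition: `z₀` minimizes `z ↦ h z - ⟪∇φ x, z⟫` over `K`. This function is strictly convex, so
`z₀`, and hence `y`, is determined by `x`. By Rademacher's theorem and `μ ≪ volume` this holds
for `γ`-a.e. `(x, y)`; the disintegration of `γ` along its first marginal is then a.e. a Dirac
kernel, i.e. `γ` is the graph measure of a measurable map.
-/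

open MeasureTheory ProbabilityTheory Set InnerProductSpace
open scoped Gradient RealInnerProductSpace

lemma HasDerivAt.nonpos_of_isMaxOn_Icc {g : ℝ → ℝ} {g' : ℝ} (hg : HasDerivAt g g' 0)
    (hmax : IsMaxOn g (Icc 0 1) 0) : g' ≤ 0 := by
  have hcone : (1 : ℝ) ∈ posTangentConeAt (Icc (0 : ℝ) 1) 0 := by
    simpa using sub_mem_posTangentConeAt_of_segment_subset (segment_eq_Icc zero_le_one).subset
  simpa using hmax.localize.hasFDerivWithinAt_nonpos hg.hasFDerivAt.hasFDerivWithinAt hcone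

lemma IsMinOn.isMinOn_sub_of_hasFDerivAt {E : Type*} [NormedAddCommGroup E] [NormedSpace ℝ E]
    {K : Set E} (hK : Convex ℝ K) {h f : E → ℝ} (hh : ConvexOn ℝ K h) {f' : E →L[ℝ] ℝ} {z₀ : E}
    (hf : HasFDerivAt f f' z₀) (hz₀ : z₀ ∈ K)
    (hmin : IsMinOn (fun z ↦ h z - f z) K z₀) : IsMinOn (fun z ↦ h z - f' z) K z₀ := by
  refine isMinOn_iff.2 fun z hz ↦ ?_
  set v := z - z₀
  -- on the segment from `z₀` to `z`, `f` lies below `f z₀` plus the chord of `h`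
  set g : ℝ → ℝ := fun t ↦ f (z₀ + t • v) - t * (h z - h z₀)
  have hg : HasDerivAt g (f' v - (h z - h z₀)) 0 := by
    have hpath : HasDerivAt (fun t : ℝ ↦ z₀ + t • v) v 0 := by
      simpa using ((hasDerivAt_id (0 : ℝ)).smul_const v).const_add z₀
    exact (hf.comp_hasDerivAt_of_eq 0 hpath (by simp)).sub (hasDerivAt_mul_const (h z - h z₀))
  have hmax : IsMaxOn g (Icc 0 1) 0 := by
    refine isMaxOn_iff.2 fun t ht ↦ ?_
    have hzt : z₀ + t • v = (1 - t) • z₀ + t • z := by simp only [v]; module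
    have hconv := hh.2 hz₀ hz (by linarith [ht.2] : (0 : ℝ) ≤ 1 - t) ht.1 (by ring)
    have hle := isMinOn_iff.1 hmin _ (hzt ▸ hK hz₀ hz (by linarith [ht.2]) ht.1 (by ring))
    rw [← hzt, smul_eq_mul, smul_eq_mul] at hconv
    simp only [g, zero_smul, add_zero, zero_mul, sub_zero]
    nlinarith
  have hderiv := hg.nonpos_of_isMaxOn_Icc hmax
  rw [map_sub] at hderiv
  linarith

lemma StrictConvexOn.lt_of_isMinOn {E : Type*} [AddCommGroup E] [Module ℝ E] {K : Set E}
    {g : E → ℝ} (hg : StrictConvexOn ℝ K g) {z₀ z : E} (hmin : IsMinOn g K z₀) (hz₀ : z₀ ∈ K)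
    (hz : z ∈ K) (hne : z ≠ z₀) : g z₀ < g z :=
  lt_of_not_ge fun hle ↦
    hne (hg.eq_of_isMinOn (fun w hw ↦ hle.trans (isMinOn_iff.1 hmin w hw)) hmin hz hz₀)

lemma Measure.eq_dirac_of_ae_eq {α : Type*} [MeasurableSpace α] {m : Measure α}
    [IsProbabilityMeasure m] {a : α} (hm : ∀ᵐ y ∂m, y = a) : m = Measure.dirac a :=
  calc m = m.map id := Measure.map_id.symm
    _ = m.map (fun _ ↦ a) := Measure.map_congr hm
    _ = Measure.dirac a := by simp [Measure.map_const]

lemma Measure.exists_measurable_eq_map_prodMk_of_ae {α β : Type*} [MeasurableSpace α]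
    [NormedAddCommGroup β] [NormedSpace ℝ β] [CompleteSpace β] [SecondCountableTopology β]
    [MeasurableSpace β] [BorelSpace β]
    (γ : Measure (α × β)) [IsFiniteMeasure γ] {R : α → β → Prop}
    (hR : ∀ x y y', R x y → R x y' → y = y') (hγ : ∀ᵐ p ∂γ, R p.1 p.2) :
    ∃ T : α → β, Measurable T ∧ γ = γ.fst.map (fun x ↦ (x, T x)) ∧ ∀ᵐ x ∂γ.fst, R x (T x) := by
  set κ := γ.condKernel
  -- the barycentre of `κ x` is a measurable choice of the point carrying it
  set T : α → β := fun x ↦ ∫ y, y ∂κ x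
  have hT : Measurable T :=
    (measurable_snd.stronglyMeasurable.integral_kernel_prod_right' (κ := κ)).measurable
  have hκR : ∀ᵐ x ∂γ.fst, ∀ᵐ y ∂κ x, R x y :=
    Measure.ae_ae_of_ae_compProd (by rwa [γ.disintegrate κ])
  have hκT : ∀ᵐ x ∂γ.fst, κ x = Measure.dirac (T x) ∧ R x (T x) := by
    filter_upwards [hκR] with x hx
    obtain ⟨y₀, hy₀⟩ := hx.exists
    have hae : ∀ᵐ y ∂κ x, y = y₀ := hx.mono fun y hy ↦ hR x y y₀ hy hy₀
    have hTx : T x = y₀ := by simp [T, integral_congr_ae hae]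
    exact ⟨hTx ▸ Measure.eq_dirac_of_ae_eq hae, hTx ▸ hy₀⟩
  refine ⟨T, hT, ?_, hκT.mono fun x hx ↦ hx.2⟩
  calc γ = γ.fst ⊗ₘ κ := (γ.disintegrate κ).symm
    _ = γ.fst ⊗ₘ Kernel.deterministic T hT :=
      Measure.compProd_congr (hκT.mono fun x hx ↦ hx.1)
    _ = γ.fst.map (fun x ↦ (x, T x)) := Measure.compProd_deterministic hT

section Potentials

variable {E : Type*} [NormedAddCommGroup E] [InnerProductSpace ℝ E] {K : Set E} {h : E → ℝ}

lemma StrictConvexOn.sub_inner (hh : StrictConvexOn ℝ K h) (l : E) :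
    StrictConvexOn ℝ K fun z ↦ h z - ⟪l, z⟫ :=
  hh.sub_concaveOn ((innerₛₗ ℝ l).concaveOn hh.1)

lemma eq_of_isMinOn_sub_inner (hh : StrictConvexOn ℝ K h) {l x y y' : E}
    (hy : x - y ∈ K ∧ IsMinOn (fun z ↦ h z - ⟪l, z⟫) K (x - y))
    (hy' : x - y' ∈ K ∧ IsMinOn (fun z ↦ h z - ⟪l, z⟫) K (x - y')) : y = y' := by
  simpa using (hh.sub_inner l).eq_of_isMinOn hy.2 hy'.2 hy.1 hy'.1

lemma isMinOn_sub_inner_gradient_of_eq [CompleteSpace E] {φ ψ : E → ℝ} (hK : Convex ℝ K)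
    (hh : ConvexOn ℝ K h) (hineq : ∀ x y, x - y ∈ K → φ x + ψ y ≤ h (x - y)) {x y : E}
    (hφ : DifferentiableAt ℝ φ x) (hxy : x - y ∈ K) (heq : φ x + ψ y = h (x - y)) :
    IsMinOn (fun z ↦ h z - ⟪∇ φ x, z⟫) K (x - y) := by
  have hf : HasFDerivAt (fun z ↦ φ (y + z)) (toDual ℝ E (∇ φ x)) (x - y) :=
    (hasFDerivAt_comp_add_left y).2 (by simpa using hφ.hasGradientAt.hasFDerivAt)
  have hmin : IsMinOn (fun z ↦ h z - φ (y + z)) K (x - y) := by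
    refine isMinOn_iff.2 fun z hz ↦ ?_
    have := hineq (y + z) y (by simpa using hz)
    simp only [add_sub_cancel, add_sub_cancel_left] at this ⊢
    linarith
  exact hmin.isMinOn_sub_of_hasFDerivAt hK hh hf hxy

end Potentials

theorem stmt18_general {d : ℕ}
    (μ : Measure (EuclideanSpace ℝ (Fin d)))
    [IsProbabilityMeasure μ]
    (hac : μ ≪ volume)
    (K : Set (EuclideanSpace ℝ (Fin d))) (hKconv : Convex ℝ K)
    (h : EuclideanSpace ℝ (Fin d) → ℝ) (hh : StrictConvexOn ℝ Set.univ h)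
    (γ : Measure (EuclideanSpace ℝ (Fin d) × EuclideanSpace ℝ (Fin d)))
    [IsProbabilityMeasure γ] (hfst : γ.fst = μ)
    (φ ψ : EuclideanSpace ℝ (Fin d) → ℝ) (Lφ : NNReal)
    (hφ : LipschitzWith Lφ φ)
    (hineq : ∀ x y, x - y ∈ K → φ x + ψ y ≤ h (x - y))
    (heq : ∀ᵐ p ∂γ, p.1 - p.2 ∈ K ∧ φ p.1 + ψ p.2 = h (p.1 - p.2)) :
    ∃ T : EuclideanSpace ℝ (Fin d) → EuclideanSpace ℝ (Fin d),
      Measurable T ∧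
      γ = μ.map (fun x => (x, T x)) ∧
      ∀ᵐ x ∂μ,
        x - T x ∈ K ∧
        (∀ z ∈ K, h (x - T x) - (inner ℝ (gradient φ x) (x - T x) : ℝ) ≤
          h z - (inner ℝ (gradient φ x) z : ℝ)) ∧
        (∀ z ∈ K, z ≠ x - T x →
          h (x - T x) - (inner ℝ (gradient φ x) (x - T x) : ℝ) <
            h z - (inner ℝ (gradient φ x) z : ℝ)) := by
  have hhK : StrictConvexOn ℝ K h := hh.subset (subset_univ K) hKconv
  have hdiff : ∀ᵐ x ∂γ.fst, DifferentiableAt ℝ φ x := hfst ▸ hac.ae_le hφ.ae_differentiableAt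
  have hγ : ∀ᵐ p ∂γ, p.1 - p.2 ∈ K ∧ IsMinOn (fun z ↦ h z - ⟪∇ φ p.1, z⟫) K (p.1 - p.2) := by
    filter_upwards [heq, ae_of_ae_map measurable_fst.aemeasurable hdiff] with p hp hφp
    exact ⟨hp.1, isMinOn_sub_inner_gradient_of_eq hKconv hhK.convexOn hineq hφp hp.1 hp.2⟩
  obtain ⟨T, hT, hγT, hTmin⟩ := Measure.exists_measurable_eq_map_prodMk_of_ae γ
    (R := fun x y ↦ x - y ∈ K ∧ IsMinOn (fun z ↦ h z - ⟪∇ φ x, z⟫) K (x - y))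
    (fun x _ _ ↦ eq_of_isMinOn_sub_inner hhK) hγ
  rw [hfst] at hγT hTmin
  refine ⟨T, hT, hγT, hTmin.mono fun x ⟨hxK, hxmin⟩ ↦ ⟨hxK, isMinOn_iff.1 hxmin, ?_⟩⟩
  exact fun z hz hne ↦ (hhK.sub_inner _).lt_of_isMinOn hxmin hxK hz hne

/-- constrained transport with strictly convex cost. If `μ ≪ Leb`, `K` is
closed convex, `h` strictly convex, `γ ∈ Π(μ,ν)` and Lipschitz potentials `φ, ψ` satisfy
`φ(x)+ψ(y) ≤ h(x−y)` whenever `x−y ∈ K` with equality (and the constraint) `γ`-a.e., then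
`γ` is induced by a Borel map `T`, with `x − T(x)` the unique minimizer over `K` of
`z ↦ h(z) − ⟪∇φ(x), z⟫` for `μ`-a.e. `x`. -/
theorem stmt18 {d : ℕ}
    (μ ν : Measure (EuclideanSpace ℝ (Fin d)))
    [IsProbabilityMeasure μ] [IsProbabilityMeasure ν]
    (hac : μ ≪ volume)
    (K : Set (EuclideanSpace ℝ (Fin d))) (hKcl : IsClosed K) (hKconv : Convex ℝ K)
    (h : EuclideanSpace ℝ (Fin d) → ℝ) (hh : StrictConvexOn ℝ Set.univ h)
    (γ : Measure (EuclideanSpace ℝ (Fin d) × EuclideanSpace ℝ (Fin d)))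
    [IsProbabilityMeasure γ] (hfst : γ.fst = μ) (hsnd : γ.snd = ν)
    (φ ψ : EuclideanSpace ℝ (Fin d) → ℝ) (Lφ Lψ : NNReal)
    (hφ : LipschitzWith Lφ φ) (hψ : LipschitzWith Lψ ψ)
    (hineq : ∀ x y, x - y ∈ K → φ x + ψ y ≤ h (x - y))
    (heq : ∀ᵐ p ∂γ, p.1 - p.2 ∈ K ∧ φ p.1 + ψ p.2 = h (p.1 - p.2)) :
    ∃ T : EuclideanSpace ℝ (Fin d) → EuclideanSpace ℝ (Fin d),
      Measurable T ∧
      γ = μ.map (fun x => (x, T x)) ∧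
      ∀ᵐ x ∂μ,
        x - T x ∈ K ∧
        (∀ z ∈ K, h (x - T x) - (inner ℝ (gradient φ x) (x - T x) : ℝ) ≤
          h z - (inner ℝ (gradient φ x) z : ℝ)) ∧
        (∀ z ∈ K, z ≠ x - T x →
          h (x - T x) - (inner ℝ (gradient φ x) (x - T x) : ℝ) <
            h z - (inner ℝ (gradient φ x) z : ℝ)) :=
  stmt18_general μ hac K hKconv h hh γ hfst φ ψ Lφ hφ hineq heq
end

section
/- Let h : [0,∞) → ℝ be strictly convex and increasing, ‖·‖ a norm on ℝ², c(z) = h(‖z‖), and p ∈ ℝ². If the face ∂c*(p) contains two distinct points z ≠ z', then ‖z‖ = ‖z'‖ is false or the segment [z/‖z‖, z'/‖z'‖] lies in the unit sphere; more precisely: either ∂c*(p) is a singleton, or there exist t ≥ 0 and a maximal segment F contained in the unit sphere {‖w‖ = 1} such that ∂c*(p) ⊆ t·F. -/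
/-- The face `∂c*(p)` of `c`. -/
noncomputable def face (c : EuclideanSpace ℝ (Fin 2) → ℝ)
    (p : EuclideanSpace ℝ (Fin 2)) : Set (EuclideanSpace ℝ (Fin 2)) :=
  {z | ∀ q, fenchelConj c p + ((inner ℝ z (q - p) : ℝ) : EReal) ≤ fenchelConj c q}


/-!
A point `z` of the face `∂c*(p)` maximises `w ↦ ⟪p, w⟫ - h (N w)`: testing the face inequality
at a subgradient `q` of `c` at `z` (a supporting slope of `h` at `N z` times a Hahn–Banach
functional norming `z`) turns `c*(p) + ⟪z, q - p⟫ ≤ c*(q)` into `c*(p) ≤ ⟪p, z⟫ - c z`. The set of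
maximisers is convex, and strict convexity of `h` forces `N` to take a single value `t` on it.
Rescaled by `t⁻¹` it becomes a convex subset of the unit sphere, so it has empty interior and, in
the plane, lies on a line. On that line `N` is convex, equal to `1` on a subsegment and coercive,
so the line meets the sphere in a segment, which is maximal among the segments of the sphere.
-/

open Set Filter Topology
open scoped RealInnerProductSpace Pointwise

section Segment

variable {V : Type*} [AddCommGroup V] [Module ℝ V]

theorem segment_eq_of_affineSubspace_inter_subset_segment {S : Set V} {L : AffineSubspace ℝ V}
    {u v : V} (hu : u ∈ L) (hv : v ∈ L) (huv : u ≠ v) (hL : (L : Set V) ∩ S ⊆ segment ℝ u v)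
    {u' v' : V} (hS : segment ℝ u' v' ⊆ S) (hsub : segment ℝ u v ⊆ segment ℝ u' v') :
    segment ℝ u v = segment ℝ u' v' := by
  have hcol : Collinear ℝ {u, v, u', v'} := collinear_insert_insert_of_mem_affineSpan_pair
    (mem_segment_iff_wbtw.1 (hsub (left_mem_segment ℝ u v))).mem_affineSpan
    (mem_segment_iff_wbtw.1 (hsub (right_mem_segment ℝ u v))).mem_affineSpan
  have hmem : ∀ w ∈ ({u', v'} : Set V), w ∈ segment ℝ u v := by
    intro w hw
    refine hL ⟨affineSpan_pair_le_of_mem_of_mem hu hv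
      (hcol.mem_affineSpan_of_mem_of_ne (by simp) (by simp) (by aesop) huv), ?_⟩
    rcases hw with rfl | rfl
    · exact hS (left_mem_segment ℝ _ _)
    · exact hS (right_mem_segment ℝ _ _)
  exact hsub.antisymm ((convex_segment u v).segment_subset (hmem u' (by simp)) (hmem v' (by simp)))

variable (N : Seminorm ℝ V)

theorem Seminorm.interior_eq_empty_of_subset_sphere [TopologicalSpace V] [ContinuousSMul ℝ V]
    {s : Set V} (hs : s ⊆ {z | N z = 1}) : interior s = ∅ := by
  refine eq_empty_of_forall_notMem fun m hm => ?_
  have hcont : Continuous fun a : ℝ => a • m := continuous_id.smul continuous_const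
  have hlim : Tendsto (fun a : ℝ => a • m) (𝓝 1) (𝓝 m) := by simpa using hcont.tendsto 1
  obtain ⟨a, ha, has⟩ := (hlim.eventually (isOpen_interior.mem_nhds hm)).exists_gt
  have hma := hs (interior_subset has)
  have hm1 := hs (interior_subset hm)
  simp only [mem_ofPred_eq, map_smul_eq_mul, Real.norm_eq_abs] at hma hm1
  rw [hm1, abs_of_pos (by linarith)] at hma
  linarith

theorem Seminorm.one_le_lineMap_of_segment_subset_sphere {u₀ v₀ : V}
    (hseg : segment ℝ u₀ v₀ ⊆ {z | N z = 1}) (r : ℝ) :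
    1 ≤ N (AffineMap.lineMap u₀ v₀ r) := by
  have hone : ∀ r ∈ Icc (0 : ℝ) 1, N (AffineMap.lineMap u₀ v₀ r) = 1 := fun r hr =>
    hseg (segment_eq_image_lineMap ℝ u₀ v₀ ▸ mem_image_of_mem _ hr)
  have hhalf : (1 / 2 : ℝ) ∈ Icc (0 : ℝ) 1 := ⟨by norm_num, by norm_num⟩
  have hmin : IsLocalMin (N ∘ AffineMap.lineMap u₀ v₀) (1 / 2 : ℝ) := by
    filter_upwards [Icc_mem_nhds (by norm_num : (0 : ℝ) < 1 / 2) (by norm_num : (1 / 2 : ℝ) < 1)]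
      with r hr
    simp only [Function.comp_apply, hone r hr, hone _ hhalf, le_refl]
  exact (hone _ hhalf).symm.le.trans
    (IsMinOn.of_isLocalMin_of_convex_univ hmin (N.convexOn.comp_affineMap _) r)

theorem Seminorm.isCompact_setOf_lineMap_le (hN : ∀ z, N z = 0 → z = 0) {u₀ v₀ : V}
    (hne : u₀ ≠ v₀) (C : ℝ) : IsCompact {r : ℝ | N (AffineMap.lineMap u₀ v₀ r) ≤ C} := by
  have hd : 0 < N (v₀ - u₀) :=
    (apply_nonneg N _).lt_of_ne' fun h0 => hne (sub_eq_zero.mp (hN _ h0)).symm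
  refine Metric.isCompact_of_isClosed_isBounded ?_ ?_
  · exact isClosed_le (N.convexOn.comp_affineMap _).locallyLipschitz.continuous continuous_const
  · refine isBounded_iff_forall_norm_le.2 ⟨(C + N u₀) / N (v₀ - u₀), fun r hr => ?_⟩
    have hsub : |r| * N (v₀ - u₀) ≤ N (AffineMap.lineMap u₀ v₀ r) + N u₀ := by
      calc |r| * N (v₀ - u₀) = N (AffineMap.lineMap u₀ v₀ r - u₀) := by
            rw [AffineMap.lineMap_apply_module', add_sub_cancel_right, map_smul_eq_mul,
              Real.norm_eq_abs]
        _ ≤ _ := map_sub_le_add N _ _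
    rw [Real.norm_eq_abs, le_div_iff₀ hd]
    linarith [hr.out]

theorem Seminorm.exists_affineSpan_pair_inter_sphere_eq_segment
    (hN : ∀ z, N z = 0 → z = 0) {u₀ v₀ : V} (hne : u₀ ≠ v₀)
    (hseg : segment ℝ u₀ v₀ ⊆ {z | N z = 1}) :
    ∃ u v, u ≠ v ∧ (line[ℝ, u₀, v₀] : Set V) ∩ {z | N z = 1} = segment ℝ u v := by
  set ℓ : ℝ →ᵃ[ℝ] V := AffineMap.lineMap u₀ v₀
  set I := {r : ℝ | N (ℓ r) ≤ 1}
  have hmem : ∀ r ∈ ({0, 1} : Set ℝ), r ∈ I := by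
    rintro r (rfl | rfl)
    · exact (hseg (left_mem_segment ℝ u₀ v₀)).le.trans' (by simp [ℓ])
    · exact (hseg (right_mem_segment ℝ u₀ v₀)).le.trans' (by simp [ℓ])
  have hIconv : Convex ℝ I := by
    simpa using (N.convexOn.comp_affineMap ℓ).convex_le 1
  have hIcc := eq_Icc_of_connected_compact ⟨⟨0, hmem 0 (by simp)⟩, hIconv.isPreconnected⟩
    (N.isCompact_setOf_lineMap_le hN hne 1)
  have h0 := hIcc ▸ hmem 0 (by simp)
  have h1 := hIcc ▸ hmem 1 (by simp)
  refine ⟨ℓ (sInf I), ℓ (sSup I),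
    (AffineMap.lineMap_injective ℝ hne).ne (by linarith [h0.1, h1.2]), ?_⟩
  rw [← image_segment, segment_eq_Icc (by linarith [h0.1, h1.2]), ← hIcc]
  ext z
  simp only [mem_inter_iff, SetLike.mem_coe, mem_affineSpan_pair_iff_exists_lineMap_eq,
    mem_ofPred_eq, mem_image, I]
  constructor
  · rintro ⟨⟨r, rfl⟩, hr⟩
    exact ⟨r, hr.le, rfl⟩
  · rintro ⟨r, hr, rfl⟩
    exact ⟨⟨r, rfl⟩, hr.antisymm (N.one_le_lineMap_of_segment_subset_sphere hseg r)⟩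

end Segment

section Plane

variable {V : Type*} [NormedAddCommGroup V] [NormedSpace ℝ V] [FiniteDimensional ℝ V]

theorem Convex.collinear_of_interior_eq_empty
    (hV : Module.finrank ℝ V = 2) {s : Set V} (hs : Convex ℝ s) (hint : interior s = ∅) :
    Collinear ℝ s := by
  rcases s.eq_empty_or_nonempty with rfl | hne
  · exact collinear_empty ℝ V
  have htop : vectorSpan ℝ s ≠ ⊤ := by
    rw [Ne, ← AffineSubspace.affineSpan_eq_top_iff_vectorSpan_eq_top_of_nonempty ℝ V V hne,
      ← hs.interior_nonempty_iff_affineSpan_eq_top, hint]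
    exact not_nonempty_empty
  have := Submodule.finrank_lt htop
  rw [collinear_iff_finrank_le_one]
  omega

theorem Seminorm.exists_maximal_segment_of_convex_subset_sphere
    (N : Seminorm ℝ V) (hV : Module.finrank ℝ V = 2) (hN : ∀ z, N z = 0 → z = 0) {s : Set V}
    (hs : Convex ℝ s) (hsN : s ⊆ {z | N z = 1}) {u₀ v₀ : V} (hu₀ : u₀ ∈ s) (hv₀ : v₀ ∈ s)
    (hne : u₀ ≠ v₀) :
    ∃ u v : V, u ≠ v ∧ segment ℝ u v ⊆ {z | N z = 1} ∧
      (∀ u' v', segment ℝ u' v' ⊆ {z | N z = 1} →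
        segment ℝ u v ⊆ segment ℝ u' v' → segment ℝ u v = segment ℝ u' v') ∧
      s ⊆ segment ℝ u v := by
  obtain ⟨u, v, huv, htrace⟩ := N.exists_affineSpan_pair_inter_sphere_eq_segment hN hne
    ((hs.segment_subset hu₀ hv₀).trans hsN)
  have hcol := hs.collinear_of_interior_eq_empty hV (N.interior_eq_empty_of_subset_sphere hsN)
  have hline : segment ℝ u v ⊆ line[ℝ, u₀, v₀] := htrace ▸ inter_subset_left
  refine ⟨u, v, huv, htrace ▸ inter_subset_right, fun u' v' =>
    segment_eq_of_affineSubspace_inter_subset_segment (hline (left_mem_segment ℝ u v))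
      (hline (right_mem_segment ℝ u v)) huv htrace.le, fun w hw => htrace ▸ ⟨?_, hsN hw⟩⟩
  exact hcol.mem_affineSpan_of_mem_of_ne hu₀ hv₀ hw hne

end Plane

theorem ConvexOn.exists_nonneg_supporting_slope {h : ℝ → ℝ} (hconv : ConvexOn ℝ (Ici 0) h)
    (hmono : MonotoneOn h (Ici 0)) {r₀ : ℝ} (hr₀ : 0 ≤ r₀) :
    ∃ s, 0 ≤ s ∧ ∀ r, 0 ≤ r → h r₀ + s * (r - r₀) ≤ h r := by
  rcases hr₀.eq_or_lt with rfl | hr₀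
  · exact ⟨0, le_rfl, fun r hr => by simpa using hmono self_mem_Ici hr hr⟩
  have hint : r₀ ∈ interior (Ici (0 : ℝ)) := by rwa [interior_Ici]
  refine ⟨derivWithin h (Iio r₀) r₀, ?_, fun r hr => ?_⟩
  · refine le_trans ?_ (hconv.slope_le_leftDeriv_of_mem_interior self_mem_Ici hint hr₀)
    rw [slope_def_field]
    exact div_nonneg (sub_nonneg.2 (hmono self_mem_Ici hr₀.le hr₀.le)) (by linarith)
  rcases lt_trichotomy r r₀ with hlt | rfl | hgt
  · have := hconv.slope_le_leftDeriv_of_mem_interior hr hint hlt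
    rw [slope_def_field, div_le_iff₀ (sub_pos.2 hlt)] at this
    linarith
  · simp
  · have := (hconv.leftDeriv_le_rightDeriv_of_mem_interior hint).trans
      (hconv.rightDeriv_le_slope_of_mem_interior hint hr hgt)
    rw [slope_def_field, le_div_iff₀ (sub_pos.2 hgt)] at this
    linarith

theorem ConcaveOn.convex_setOf_isMaxOn {V : Type*} [AddCommGroup V] [Module ℝ V] {f : V → ℝ}
    (hf : ConcaveOn ℝ univ f) : Convex ℝ {x | IsMaxOn f univ x} := by
  intro x hx y hy a b ha hb hab
  refine isMaxOn_univ_iff.2 fun w => ?_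
  have hxw := isMaxOn_univ_iff.1 hx w
  have hyw := isMaxOn_univ_iff.1 hy w
  have := hf.2 (mem_univ x) (mem_univ y) ha hb hab
  have hw : f w = a * f w + b * f w := by rw [← add_mul, hab, one_mul]
  simp only [smul_eq_mul] at this
  nlinarith [mul_le_mul_of_nonneg_left hxw ha, mul_le_mul_of_nonneg_left hyw hb]

section Subgradient

variable {V : Type*} [AddCommGroup V] [Module ℝ V] (N : Seminorm ℝ V)

theorem Seminorm.exists_linearMap_le_eq (z₀ : V) :
    ∃ g : V →ₗ[ℝ] ℝ, (∀ x, g x ≤ N x) ∧ g z₀ = N z₀ := by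
  rcases eq_or_ne z₀ 0 with rfl | hz₀
  · exact ⟨0, fun x => apply_nonneg N x, by simp⟩
  let f : V →ₗ.[ℝ] ℝ := LinearPMap.mkSpanSingleton z₀ (N z₀) hz₀
  have hle_span : ∀ x : f.domain, f x ≤ N x := by
    rintro ⟨x, hx⟩
    obtain ⟨a, rfl⟩ := Submodule.mem_span_singleton.mp hx
    rw [LinearPMap.mkSpanSingleton'_apply, map_smul_eq_mul, Real.norm_eq_abs, smul_eq_mul]
    exact mul_le_mul_of_nonneg_right (le_abs_self a) (apply_nonneg N z₀)
  obtain ⟨g, hg, hle⟩ := exists_extension_of_le_sublinear _ N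
    (fun c hc x => by rw [map_smul_eq_mul, Real.norm_of_nonneg hc.le]) (map_add_le_add N) hle_span
  exact ⟨g, hle, (hg ⟨z₀, Submodule.mem_span_singleton_self z₀⟩).trans
    (LinearPMap.mkSpanSingleton_apply ℝ ℝ hz₀ (N z₀))⟩

theorem Seminorm.convexOn_comp {h : ℝ → ℝ} (hmono : MonotoneOn h (Ici 0))
    (hconv : ConvexOn ℝ (Ici 0) h) : ConvexOn ℝ univ fun z => h (N z) :=
  ⟨convex_univ, fun x _ y _ a b ha hb hab =>
    (hmono (apply_nonneg N _) (mem_Ici.2 (by simp only [smul_eq_mul]; positivity))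
      (N.convexOn.2 trivial trivial ha hb hab)).trans
      (hconv.2 (apply_nonneg N x) (apply_nonneg N y) ha hb hab)⟩

end Subgradient

section InnerProduct

variable {E : Type*} [NormedAddCommGroup E] [InnerProductSpace ℝ E] (N : Seminorm ℝ E)

theorem Seminorm.exists_isMaxOn_inner_sub_comp [FiniteDimensional ℝ E] {h : ℝ → ℝ}
    (hmono : MonotoneOn h (Ici 0)) (hconv : ConvexOn ℝ (Ici 0) h) (z₀ : E) :
    ∃ q : E, IsMaxOn (fun w => ⟪q, w⟫ - h (N w)) univ z₀ := by
  obtain ⟨s, hs, hsupp⟩ := hconv.exists_nonneg_supporting_slope hmono (apply_nonneg N z₀)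
  obtain ⟨g, hgN, hgz₀⟩ := N.exists_linearMap_le_eq z₀
  refine ⟨(InnerProductSpace.toDual ℝ E).symm (s • LinearMap.toContinuousLinearMap g),
    isMaxOn_univ_iff.2 fun w => ?_⟩
  simp only [InnerProductSpace.toDual_symm_apply, FunLike.coe_smul, Pi.smul_apply,
    LinearMap.coe_toContinuousLinearMap', smul_eq_mul, hgz₀]
  nlinarith [hsupp (N w) (apply_nonneg N w), mul_le_mul_of_nonneg_left (hgN w) hs]

theorem Seminorm.concaveOn_inner_sub_comp {h : ℝ → ℝ} (hmono : MonotoneOn h (Ici 0))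
    (hconv : ConvexOn ℝ (Ici 0) h) (p : E) :
    ConcaveOn ℝ univ fun w => ⟪p, w⟫ - h (N w) :=
  ((innerₛₗ ℝ p).concaveOn convex_univ).sub (N.convexOn_comp hmono hconv)

theorem Seminorm.eq_of_isMaxOn_inner_sub_comp {h : ℝ → ℝ} (hmono : MonotoneOn h (Ici 0))
    (hconv : StrictConvexOn ℝ (Ici 0) h) {p z z' : E}
    (hz : IsMaxOn (fun w => ⟪p, w⟫ - h (N w)) univ z)
    (hz' : IsMaxOn (fun w => ⟪p, w⟫ - h (N w)) univ z') : N z = N z' := by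
  by_contra hne
  set m := (1 / 2 : ℝ) • z + (1 / 2 : ℝ) • z'
  have hNm : N m ≤ 1 / 2 * N z + 1 / 2 * N z' :=
    N.convexOn.2 trivial trivial (by norm_num) (by norm_num) (by norm_num)
  have hhm : h (N m) ≤ h (1 / 2 * N z + 1 / 2 * N z') :=
    hmono (apply_nonneg N m) (mem_Ici.2 (by positivity)) hNm
  have hstrict : h (1 / 2 * N z + 1 / 2 * N z') < 1 / 2 * h (N z) + 1 / 2 * h (N z') :=
    hconv.2 (apply_nonneg N z) (apply_nonneg N z') hne (by norm_num) (by norm_num) (by norm_num)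
  have hinner : ⟪p, m⟫ = 1 / 2 * ⟪p, z⟫ + 1 / 2 * ⟪p, z'⟫ := by
    simp only [m, inner_add_right, real_inner_smul_right]
  have hmz := isMaxOn_univ_iff.1 hz m
  have hz'z := isMaxOn_univ_iff.1 hz z'
  have hzz' := isMaxOn_univ_iff.1 hz' z
  linarith

end InnerProduct

theorem fenchelConj_eq_of_isMaxOn {c : EuclideanSpace ℝ (Fin 2) → ℝ}
    {q z : EuclideanSpace ℝ (Fin 2)} (hz : IsMaxOn (fun w => ⟪q, w⟫ - c w) univ z) :
    fenchelConj c q = ((⟪q, z⟫ - c z : ℝ) : EReal) :=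
  le_antisymm (iSup_le fun w => EReal.coe_le_coe_iff.2 (isMaxOn_univ_iff.1 hz w))
    (le_iSup (fun w => ((⟪q, w⟫ - c w : ℝ) : EReal)) z)

theorem isMaxOn_of_mem_face {c : EuclideanSpace ℝ (Fin 2) → ℝ} {p z : EuclideanSpace ℝ (Fin 2)}
    (hc : ∃ q, IsMaxOn (fun w => ⟪q, w⟫ - c w) univ z) (hz : z ∈ face c p) :
    IsMaxOn (fun w => ⟪p, w⟫ - c w) univ z := by
  obtain ⟨q, hq⟩ := hc
  refine isMaxOn_univ_iff.2 fun w => ?_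
  have := (add_le_add (le_iSup (fun w => ((⟪p, w⟫ - c w : ℝ) : EReal)) w) le_rfl).trans
    ((hz q).trans (fenchelConj_eq_of_isMaxOn hq).le)
  rw [← EReal.coe_add, EReal.coe_le_coe_iff, inner_sub_right, real_inner_comm q z,
    real_inner_comm p z] at this
  linarith

/-- for `c(z) = h(N z)` with `N` a norm on `ℝ²` and `h` strictly convex
increasing, every non-singleton face `∂c*(p)` is contained in a homothety `t·F` of a
maximal segment `F` of the unit sphere `{N = 1}`. -/
theorem stmt19 (N : EuclideanSpace ℝ (Fin 2) → ℝ)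
    (hN0 : ∀ z, N z = 0 ↔ z = 0)
    (hNsmul : ∀ (a : ℝ) (z : EuclideanSpace ℝ (Fin 2)), N (a • z) = |a| * N z)
    (hNadd : ∀ z w, N (z + w) ≤ N z + N w)
    (h : ℝ → ℝ)
    (hmono : MonotoneOn h (Set.Ici 0))
    (hconv : StrictConvexOn ℝ (Set.Ici 0) h)
    (c : EuclideanSpace ℝ (Fin 2) → ℝ) (hc : ∀ z, c z = h (N z))
    (p : EuclideanSpace ℝ (Fin 2)) :
    (face c p).Subsingleton ∨
      ∃ t : ℝ, 0 ≤ t ∧ ∃ u v : EuclideanSpace ℝ (Fin 2), u ≠ v ∧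
        segment ℝ u v ⊆ {z | N z = 1} ∧
        (∀ u' v', segment ℝ u' v' ⊆ {z | N z = 1} →
          segment ℝ u v ⊆ segment ℝ u' v' → segment ℝ u v = segment ℝ u' v') ∧
        face c p ⊆ (fun w => t • w) '' segment ℝ u v := by
  let n : Seminorm ℝ (EuclideanSpace ℝ (Fin 2)) := Seminorm.of N hNadd hNsmul
  have hn0 : ∀ z, n z = 0 → z = 0 := fun z => (hN0 z).1
  obtain rfl : c = fun z => h (n z) := funext hc
  set A := {z | IsMaxOn (fun w => ⟪p, w⟫ - h (n w)) univ z}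
  have hfaceA : face _ p ⊆ A := fun z hz =>
    isMaxOn_of_mem_face (n.exists_isMaxOn_inner_sub_comp hmono hconv.convexOn z) hz
  rcases (face _ p).subsingleton_or_nontrivial with hsub | ⟨z₁, hz₁, z₂, hz₂, hne⟩
  · exact Or.inl hsub
  right
  have hnA : ∀ z ∈ A, n z = n z₁ := fun z hz =>
    n.eq_of_isMaxOn_inner_sub_comp hmono hconv hz (hfaceA hz₁)
  set t := n z₁
  have ht : 0 < t := (apply_nonneg n z₁).lt_of_ne' fun h0 =>
    hne ((hn0 _ h0).trans (hn0 _ ((hnA z₂ (hfaceA hz₂)).trans h0)).symm)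
  have hB : t⁻¹ • A ⊆ {z | n z = 1} := by
    rintro _ ⟨z, hz, rfl⟩
    simp [map_smul_eq_mul, hnA z hz, ht.ne', abs_of_pos ht]
  obtain ⟨u, v, huv, hseg, hmax, hBuv⟩ := n.exists_maximal_segment_of_convex_subset_sphere
    finrank_euclideanSpace_fin hn0
    (((n.concaveOn_inner_sub_comp hmono hconv.convexOn p).convex_setOf_isMaxOn).smul t⁻¹) hB
    (smul_mem_smul_set (hfaceA hz₁)) (smul_mem_smul_set (hfaceA hz₂))
    (by simpa [ht.ne'] using hne)
  exact ⟨t, ht.le, u, v, huv, hseg, hmax, fun z hz =>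
    ⟨t⁻¹ • z, hBuv (smul_mem_smul_set (hfaceA hz)), smul_inv_smul₀ ht.ne' z⟩⟩
end
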